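/- Let V ∈ U(d), N ≥ 1, let λ₁, λ_d be eigenvalues of V with corresponding orthogonal spectral projectors P₁, P_d, and let ρ₁, ρ_d ∈ 𝒟(ℂ^d) satisfy ρ₁ = P₁ρ₁P₁, ρ_d = P_dρ_dP_d and diag(ρ₁) = diag(ρ_d). Suppose there is a probability vector (p₁, p₂, p₃) with p₁λ₁^N + p₂λ₁λ_d^{N−1} + p₃λ_d^N = 0. Then ρ = p₁ρ₁^{⊗N} + p₂(ρ₁ ⊗ ρ_d^{⊗(N−1)}) + p₃ρ_d^{⊗N} is a density matrix on (ℂ^d)^{⊗N} satisfying diag(ρ·V^{⊗N}) = 0; consequently ‖𝒫_{V^{⊗N}} − 𝒫_𝟙‖_◇ = 2, i.e., N parallel queries allow perfect discrimination of 𝒫_V from the standard-basis measurement. -/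

import Mathlib

/-!
Upper bound: every slice of `𝒫_U ⊗ id` is a unitary conjugation followed by the dephasing in the
system basis, and both are contractions for the trace norm. This follows from the duality
`‖X‖₁ = max {Re Tr (W X) : ‖W‖ ≤ 1}` (operator norm; the maximum is attained at the partial
isometry of the polar decomposition), since the dual maps `W ↦ Kᴴ W K` and the dephasing itself
preserve `‖W‖ ≤ 1`. Hence `‖𝒫_U - 𝒫_𝟙‖_◇ ≤ 2`.

Lower bound: if `ρ = C Cᴴ` and `diag (ρ U) = 0`, then `𝒫_U ⊗ id` and `𝒫_𝟙 ⊗ id` send the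
purification of `ρ` to two states with orthogonal supports, so their difference has trace norm 2.

For the state of the statement, `ρ_k V = λ_k ρ_k` since `ρ_k` lives on an eigenspace of `V`. So the
diagonal of each tensor product times `V^{⊗N}` is the common diagonal `∏ₖ ρ₁(fₖ, fₖ)` scaled by
`λ₁^N`, `λ₁ λ_d^{N-1}` or `λ_d^N`, and the `p`-weighted sum of these factors vanishes.
-/

open Matrix MeasureTheory
open scoped ENNReal ComplexOrder

noncomputable section

namespace Paper

/-- Trace norm `‖X‖₁ = Tr √(Xᴴ X)`. -/
noncomputable def traceNorm {n : Type*} [Fintype n] [DecidableEq n] (X : Matrix n n ℂ) : ℝ :=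
  (((Matrix.posSemidef_conjTranspose_mul_self X).1.eigenvectorUnitary : Matrix n n ℂ) *
    Matrix.diagonal (((↑) : ℝ → ℂ) ∘ Real.sqrt ∘ (Matrix.posSemidef_conjTranspose_mul_self X).1.eigenvalues) *
    (star (Matrix.posSemidef_conjTranspose_mul_self X).1.eigenvectorUnitary : Matrix n n ℂ)).trace.re

/-- `(S ⊗ id)(X)`, the map `S` applied to the first tensor factor. -/
def tensorApplyLeft {n n' m : Type*} [Fintype n] [Fintype m]
    (S : Matrix n n ℂ →ₗ[ℂ] Matrix n' n' ℂ)
    (X : Matrix (n × m) (n × m) ℂ) : Matrix (n' × m) (n' × m) ℂ :=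
  Matrix.of fun p q => S (Matrix.of fun i j => X (i, p.2) (j, q.2)) p.1 q.1

/-- Diamond norm of a linear map between matrix spaces. -/
noncomputable def diamondNorm {n n' : Type*} [Fintype n] [DecidableEq n] [Fintype n']
    [DecidableEq n'] (S : Matrix n n ℂ →ₗ[ℂ] Matrix n' n' ℂ) : ℝ :=
  sSup { t : ℝ | ∃ (k : ℕ) (X : Matrix (n × Fin (k + 1)) (n × Fin (k + 1)) ℂ),
    traceNorm X = 1 ∧ t = traceNorm (tensorApplyLeft S X) }

/-- The completely dephasing channel in the standard basis. -/
def dephaseMap (n : Type*) [Fintype n] [DecidableEq n] :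
    Matrix n n ℂ →ₗ[ℂ] Matrix n n ℂ where
  toFun X := Matrix.diagonal fun i => X i i
  map_add' X Y := by
    ext i j
    by_cases h : i = j <;> simp [Matrix.diagonal_apply, h]
  map_smul' c X := by
    ext i j
    by_cases h : i = j <;> simp [Matrix.diagonal_apply, h]

/-- The unitary channel `Φ_U(X) = U X Uᴴ`. -/
def unitaryChannel {n : Type*} [Fintype n] (U : Matrix n n ℂ) :
    Matrix n n ℂ →ₗ[ℂ] Matrix n n ℂ where
  toFun X := U * X * Uᴴ
  map_add' X Y := by simp [Matrix.mul_add, Matrix.add_mul]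
  map_smul' c X := by simp [mul_smul_comm, smul_mul_assoc]

/-- The von Neumann measurement channel `𝒫_U(σ) = Σ_i ⟨i|U† σ U|i⟩ |i⟩⟨i| = diag(U† σ U)`. -/
def measChannel {n : Type*} [Fintype n] [DecidableEq n] (U : Matrix n n ℂ) :
    Matrix n n ℂ →ₗ[ℂ] Matrix n n ℂ :=
  (dephaseMap n).comp (unitaryChannel Uᴴ)

/-- `N`-fold tensor (Kronecker) power of a matrix. -/
def tensorPow {d : ℕ} (U : Matrix (Fin d) (Fin d) ℂ) (N : ℕ) :
    Matrix (Fin N → Fin d) (Fin N → Fin d) ℂ :=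
  Matrix.of fun f g => ∏ k, U (f k) (g k)

/-- Tensor product of a family of `d × d` matrices. -/
def tensorFamily {d N : ℕ} (ρ : Fin N → Matrix (Fin d) (Fin d) ℂ) :
    Matrix (Fin N → Fin d) (Fin N → Fin d) ℂ :=
  Matrix.of fun f g => ∏ k, (ρ k) (f k) (g k)

/-- Density matrices. -/
def IsDensityMatrix {n : Type*} [Fintype n] (ρ : Matrix n n ℂ) : Prop :=
  ρ.PosSemidef ∧ ρ.trace = 1

/-- The set of diagonal unitary matrices `𝒟𝒰`. -/
def diagUnitary (n : Type*) [Fintype n] [DecidableEq n] : Set (Matrix n n ℂ) :=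
  { E | E ∈ Matrix.unitaryGroup n ℂ ∧ E.IsDiag }

/-- `Θ(U)`: the angle of the shortest arc of the unit circle containing all eigenvalues. -/
noncomputable def thetaArc {n : Type*} [Fintype n] [DecidableEq n] (U : Matrix n n ℂ) : ℝ :=
  sInf { t : ℝ | 0 ≤ t ∧ ∃ α : ℝ, ∀ lam ∈ spectrum ℂ U, ∃ s : ℝ, 0 ≤ s ∧ s ≤ t ∧
    lam = Complex.exp (Complex.I * (↑α + ↑s)) }

/-- `Υ(U) = min_{E ∈ 𝒟𝒰} Θ(UE)`. -/
noncomputable def upsilonArc {n : Type*} [Fintype n] [DecidableEq n] (U : Matrix n n ℂ) : ℝ :=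
  sInf { t : ℝ | ∃ E ∈ diagUnitary n, t = thetaArc (U * E) }

/-- Numerical range `W(A)`. -/
def numericalRange {n : Type*} [Fintype n] (A : Matrix n n ℂ) : Set ℂ :=
  { z | ∃ x : n → ℂ, (∑ i, ‖x i‖ ^ 2) = 1 ∧ z = star x ⬝ᵥ A.mulVec x }

/-- minimal modulus over the numerical range -/
noncomputable def nuMin {n : Type*} [Fintype n] (A : Matrix n n ℂ) : ℝ :=
  sInf { r : ℝ | ∃ z ∈ numericalRange A, r = ‖z‖ }

/-- Operator (spectral) norm of a matrix. -/
noncomputable def opNorm {n : Type*} [Fintype n] [DecidableEq n] (A : Matrix n n ℂ) : ℝ :=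
  ‖Matrix.toEuclideanCLM (𝕜 := ℂ) A‖

/-- Matrix of the orthogonal projection onto a subspace of `EuclideanSpace ℂ n`. -/
noncomputable def projMatrix {n : Type*} [Fintype n] [DecidableEq n]
    (K : Submodule ℂ (EuclideanSpace ℂ n)) : Matrix n n ℂ :=
  Matrix.toEuclideanLin.symm (K.subtype ∘ₗ K.orthogonalProjectionOnto.toLinearMap)

/-- Matrix of the orthogonal projection onto the eigenspace of `A` for eigenvalue `lam`. -/
noncomputable def eigProj {n : Type*} [Fintype n] [DecidableEq n] (A : Matrix n n ℂ) (lam : ℂ) :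
    Matrix n n ℂ :=
  projMatrix (Module.End.eigenspace (Matrix.toEuclideanLin A) lam)

end Paper

namespace Paper

/-- Optimal unambiguous discrimination probability of `𝒫_𝟙` vs `𝒫_U` without entanglement. -/
noncomputable def puNoEnt {n : Type*} [Fintype n] [DecidableEq n] (U : Matrix n n ℂ) : ℝ :=
  sSup { t : ℝ | ∃ σ M₁ M₂ M₃ : Matrix n n ℂ,
    IsDensityMatrix σ ∧ M₁.PosSemidef ∧ M₂.PosSemidef ∧ M₃.PosSemidef ∧ M₁ + M₂ + M₃ = 1 ∧
    (M₂ * measChannel (1 : Matrix n n ℂ) σ).trace = 0 ∧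
    (M₁ * measChannel U σ).trace = 0 ∧
    t = (1 / 2) * (((M₁ * measChannel (1 : Matrix n n ℂ) σ).trace).re +
                   ((M₂ * measChannel U σ).trace).re) }

/-- Optimal entanglement-assisted unambiguous discrimination probability of `𝒫_𝟙` vs `𝒫_U`. -/
noncomputable def puEnt {n : Type*} [Fintype n] [DecidableEq n] (U : Matrix n n ℂ) : ℝ :=
  sSup { t : ℝ | ∃ (k : ℕ) (σ M₁ M₂ M₃ : Matrix (n × Fin (k + 1)) (n × Fin (k + 1)) ℂ),
    IsDensityMatrix σ ∧ M₁.PosSemidef ∧ M₂.PosSemidef ∧ M₃.PosSemidef ∧ M₁ + M₂ + M₃ = 1 ∧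
    (M₂ * tensorApplyLeft (measChannel (1 : Matrix n n ℂ)) σ).trace = 0 ∧
    (M₁ * tensorApplyLeft (measChannel U) σ).trace = 0 ∧
    t = (1 / 2) * (((M₁ * tensorApplyLeft (measChannel (1 : Matrix n n ℂ)) σ).trace).re +
                   ((M₂ * tensorApplyLeft (measChannel U) σ).trace).re) }

/-- `Π_A = Σ_{i ∈ A} |i⟩⟨i|`. -/
noncomputable def basisProj {n : Type*} [Fintype n] [DecidableEq n] (A : Finset n) :
    Matrix n n ℂ :=
  ∑ i ∈ A, Matrix.single i i (1 : ℂ)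

/-- `ℙ_{Γ,Δ}`: projector onto `span{U|i⟩ : i ∈ Γᶜ} ∩ span{|j⟩ : j ∈ Δᶜ}`. -/
noncomputable def PGD {n : Type*} [Fintype n] [DecidableEq n] (U : Matrix n n ℂ)
    (Γ Δ : Finset n) : Matrix n n ℂ :=
  projMatrix
    ((Submodule.span ℂ { v : EuclideanSpace ℂ n |
        ∃ i ∉ Γ, v = (WithLp.equiv 2 (n → ℂ)).symm (fun r => U r i) }) ⊓
     (Submodule.span ℂ { v : EuclideanSpace ℂ n |
        ∃ j ∉ Δ, v = (WithLp.equiv 2 (n → ℂ)).symm (Pi.single j 1) }))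

/-- `W` acting on the `k`-th of `N` registers (identity elsewhere). -/
def actOn {d : ℕ} (N : ℕ) (W : Matrix (Fin d) (Fin d) ℂ) (k : ℕ) :
    Matrix (Fin N → Fin d) (Fin N → Fin d) ℂ :=
  Matrix.of fun f g => ∏ j : Fin N,
    if (j : ℕ) = k then W (f j) (g j) else (if f j = g j then (1 : ℂ) else 0)

/-- A system operator extended by identity on the ancilla. -/
def sysOp {d N m : ℕ} (A : Matrix (Fin N → Fin d) (Fin N → Fin d) ℂ) :
    Matrix ((Fin N → Fin d) × Fin m) ((Fin N → Fin d) × Fin m) ℂ :=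
  Matrix.of fun p q => A p.1 q.1 * (if p.2 = q.2 then (1 : ℂ) else 0)

/-- `C` is classically controlled on the first `k` registers, i.e. of the form
`Σ_{i₁,…,i_k} |i₁…i_k⟩⟨i₁…i_k| ⊗ V_{i₁…i_k}`. -/
def ControlledOnFirst {d N m : ℕ} (k : ℕ)
    (C : Matrix ((Fin N → Fin d) × Fin m) ((Fin N → Fin d) × Fin m) ℂ) : Prop :=
  ∀ p q, (∃ j : Fin N, (j : ℕ) < k ∧ p.1 j ≠ q.1 j) → C p q = 0

/-- The sequential-scheme unitary
`A_W = (𝟙⊗…⊗W⊗𝟙ₘ)·C_{N-1}·…·C₁·(W⊗𝟙⊗…⊗𝟙ₘ)`. -/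
noncomputable def seqUnitary {d N m : ℕ} (W : Matrix (Fin d) (Fin d) ℂ)
    (C : ℕ → Matrix ((Fin N → Fin d) × Fin m) ((Fin N → Fin d) × Fin m) ℂ) :
    Matrix ((Fin N → Fin d) × Fin m) ((Fin N → Fin d) × Fin m) ℂ :=
  (((List.range (N - 1)).reverse.map fun j =>
      sysOp (actOn N W (j + 1)) * C (j + 1)).prod) * sysOp (actOn N W 0)

/-- Dephasing in the standard product basis on the first `N` registers only. -/
def dephaseFirst (d N m : ℕ) :
    Matrix ((Fin N → Fin d) × Fin m) ((Fin N → Fin d) × Fin m) ℂ →ₗ[ℂ]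
    Matrix ((Fin N → Fin d) × Fin m) ((Fin N → Fin d) × Fin m) ℂ where
  toFun X := Matrix.of fun p q => if p.1 = q.1 then X p q else 0
  map_add' X Y := by
    ext p q
    by_cases h : p.1 = q.1 <;> simp [h]
  map_smul' c X := by
    ext p q
    by_cases h : p.1 = q.1 <;> simp [h]

/-- The Hadamard matrix. -/
noncomputable def Hmat : Matrix (Fin 2) (Fin 2) ℂ :=
  (((1 : ℝ) / Real.sqrt 2 : ℝ) : ℂ) • !![1, 1; 1, -1]

/-- `ψ = (|1⟩⊗|1⟩ − |2⟩⊗|2⟩)/√2`. -/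
noncomputable def psiVec : Fin 2 × Fin 2 → ℂ := fun p =>
  if p = (0, 0) then (((1 : ℝ) / Real.sqrt 2 : ℝ) : ℂ)
  else if p = (1, 1) then -(((1 : ℝ) / Real.sqrt 2 : ℝ) : ℂ) else 0

/-- `ρ = |ψ⟩⟨ψ|`. -/
noncomputable def rhoPsi : Matrix (Fin 2 × Fin 2) (Fin 2 × Fin 2) ℂ :=
  Matrix.of fun p q => psiVec p * (starRingEnd ℂ) (psiVec q)

end Paper

namespace Paper

open scoped Matrix.Norms.L2Operator MatrixOrder InnerProductSpace Kronecker

section TraceNorm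

variable {n : Type*} [Fintype n] [DecidableEq n]

lemma continuousOn_spectrum (A : Matrix n n ℂ) (f : ℝ → ℝ) : ContinuousOn f (spectrum ℝ A) :=
  A.finite_real_spectrum.continuousOn f

lemma traceNorm_eq_re_trace_cfc_sqrt (X : Matrix n n ℂ) :
    traceNorm X = (cfc Real.sqrt (Xᴴ * X)).trace.re := by
  rw [(isHermitian_conjTranspose_mul_self X).cfc_eq]
  rfl

lemma traceNorm_eq_re_trace_of_mul_self {X S : Matrix n n ℂ} (hS : S.PosSemidef)
    (h : S * S = Xᴴ * X) : traceNorm X = S.trace.re := by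
  have hXX : 0 ≤ Xᴴ * X := (posSemidef_conjTranspose_mul_self X).nonneg
  rw [traceNorm_eq_re_trace_cfc_sqrt, ← cfcₙ_eq_cfc, ← CFC.sqrt_eq_real_sqrt _ hXX,
    CFC.sqrt_unique h hS.nonneg]

lemma traceNorm_eq_re_trace {A : Matrix n n ℂ} (hA : A.PosSemidef) : traceNorm A = A.trace.re :=
  traceNorm_eq_re_trace_of_mul_self hA (by rw [hA.1.eq])

lemma traceNorm_sub_eq_of_mul_eq_zero {A B : Matrix n n ℂ} (hA : A.PosSemidef) (hB : B.PosSemidef)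
    (hAB : A * B = 0) : traceNorm (A - B) = A.trace.re + B.trace.re := by
  have hBA : B * A = 0 := by
    simpa [hA.1.eq, hB.1.eq] using congrArg conjTranspose hAB
  have hAB' : (A - B)ᴴ = A - B := by rw [conjTranspose_sub, hA.1.eq, hB.1.eq]
  rw [traceNorm_eq_re_trace_of_mul_self (hA.add hB), trace_add, Complex.add_re]
  simp only [hAB', add_mul, mul_add, sub_mul, mul_sub, hAB, hBA]
  abel

lemma trace_eq_sum_inner (M : Matrix n n ℂ) (b : OrthonormalBasis n ℂ (EuclideanSpace ℂ n)) :
    M.trace = ∑ i, ⟪b i, toEuclideanCLM (𝕜 := ℂ) M (b i)⟫_ℂ :=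
  calc M.trace = LinearMap.trace ℂ _
        (toEuclideanCLM (𝕜 := ℂ) M : EuclideanSpace ℂ n →ₗ[ℂ] EuclideanSpace ℂ n) := by
        rw [coe_toEuclideanCLM_eq_toEuclideanLin, ← trace_toLin_eq M (PiLp.basisFun 2 ℂ n),
          ← toLpLin_eq_toLin]
    _ = _ := LinearMap.trace_eq_sum_inner _ b

lemma traceNorm_eq_sum_sqrt_eigenvalues (X : Matrix n n ℂ) :
    traceNorm X = ∑ i, √((isHermitian_conjTranspose_mul_self X).eigenvalues i) := by
  rw [traceNorm, trace_mul_cycle, Unitary.coe_star_mul_self, one_mul, trace_diagonal,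
    Complex.re_sum]
  rfl

lemma norm_toEuclideanCLM_eigenvectorBasis (X : Matrix n n ℂ) (i : n) :
    ‖toEuclideanCLM (𝕜 := ℂ) X ((isHermitian_conjTranspose_mul_self X).eigenvectorBasis i)‖ =
      √((isHermitian_conjTranspose_mul_self X).eigenvalues i) := by
  set hA := isHermitian_conjTranspose_mul_self X
  set b := hA.eigenvectorBasis i
  have hb : toEuclideanCLM (𝕜 := ℂ) (Xᴴ * X) b = (hA.eigenvalues i : ℂ) • b :=
    WithLp.ofLp_injective 2 (by rw [ofLp_toEuclideanCLM, hA.mulVec_eigenvectorBasis]; rfl)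
  have hsq : ‖toEuclideanCLM (𝕜 := ℂ) X b‖ ^ 2 = hA.eigenvalues i := by
    rw [← inner_self_eq_norm_sq (𝕜 := ℂ), ← ContinuousLinearMap.adjoint_inner_right,
      ← ContinuousLinearMap.star_eq_adjoint, ← map_star, star_eq_conjTranspose,
      ← mul_apply_eq_comp, ← map_mul, hb, inner_smul_right,
      inner_self_eq_norm_sq_to_K, hA.eigenvectorBasis.orthonormal.1 i]
    simp
  rw [← hsq, Real.sqrt_sq (norm_nonneg _)]

lemma norm_trace_mul_le_traceNorm {W : Matrix n n ℂ} (hW : ‖W‖ ≤ 1) (X : Matrix n n ℂ) :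
    ‖(W * X).trace‖ ≤ traceNorm X := by
  set b := (isHermitian_conjTranspose_mul_self X).eigenvectorBasis
  rw [trace_eq_sum_inner _ b, traceNorm_eq_sum_sqrt_eigenvalues]
  refine (norm_sum_le _ _).trans (Finset.sum_le_sum fun i _ => ?_)
  rw [← norm_toEuclideanCLM_eigenvectorBasis]
  calc ‖⟪b i, toEuclideanCLM (𝕜 := ℂ) (W * X) (b i)⟫_ℂ‖
      ≤ ‖b i‖ * ‖toEuclideanCLM (𝕜 := ℂ) W (toEuclideanCLM (𝕜 := ℂ) X (b i))‖ := by
        rw [map_mul]; exact norm_inner_le_norm _ _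
    _ ≤ 1 * (‖W‖ * ‖toEuclideanCLM (𝕜 := ℂ) X (b i)‖) := by
        rw [b.orthonormal.1 i]
        exact mul_le_mul_of_nonneg_left ((toEuclideanCLM (𝕜 := ℂ) W).le_opNorm _) zero_le_one
    _ ≤ ‖toEuclideanCLM (𝕜 := ℂ) X (b i)‖ := by
        rw [one_mul]; exact mul_le_of_le_one_left (norm_nonneg _) hW

lemma inv_sqrt_mul_self (x : ℝ) : (√x)⁻¹ * x = √x := by
  rcases le_or_gt 0 x with hx | hx
  · nth_rewrite 2 [← Real.mul_self_sqrt hx]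
    rw [← mul_assoc, inv_mul_mul_self]
  · simp [Real.sqrt_eq_zero'.mpr hx.le]

lemma abs_inv_sqrt_mul_self_mul_inv_sqrt_le_one (x : ℝ) : |(√x)⁻¹ * x * (√x)⁻¹| ≤ 1 := by
  rw [inv_sqrt_mul_self]
  rcases eq_or_ne √x 0 with hx | hx <;> simp [hx]

lemma exists_norm_le_one_re_trace_mul_eq_traceNorm (X : Matrix n n ℂ) :
    ∃ W : Matrix n n ℂ, ‖W‖ ≤ 1 ∧ (W * X).trace.re = traceNorm X := by
  have hA : IsSelfAdjoint (Xᴴ * X) := isHermitian_conjTranspose_mul_self X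
  have hcont := continuousOn_spectrum (Xᴴ * X)
  -- since `0⁻¹ = 0`, `R` inverts `√(Xᴴ X)` on its support and vanishes on its kernel
  set R := cfc (fun x : ℝ => (√x)⁻¹) (Xᴴ * X)
  have hR : star R = R := (cfc_predicate _ (Xᴴ * X) : IsSelfAdjoint R).star_eq
  refine ⟨R * Xᴴ, ?_, ?_⟩
  · have hRAR : R * Xᴴ * star (R * Xᴴ) = cfc (fun x : ℝ => (√x)⁻¹ * x * (√x)⁻¹) (Xᴴ * X) := by
      rw [cfc_mul _ _ _ (hcont _) (hcont _), cfc_mul _ _ _ (hcont _) (hcont _),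
        cfc_id' ℝ (Xᴴ * X) hA, star_mul, hR, star_eq_conjTranspose, conjTranspose_conjTranspose]
      simp only [R, mul_assoc]
    have hsq : ‖R * Xᴴ‖ * ‖R * Xᴴ‖ ≤ 1 := by
      rw [← CStarRing.norm_self_mul_star, hRAR]
      exact norm_cfc_le zero_le_one fun x _ => abs_inv_sqrt_mul_self_mul_inv_sqrt_le_one x
    nlinarith [norm_nonneg (R * Xᴴ)]
  · have hRA : R * (Xᴴ * X) = cfc Real.sqrt (Xᴴ * X) :=
      calc R * (Xᴴ * X) = cfc (fun x : ℝ => (√x)⁻¹) (Xᴴ * X) * cfc (fun x : ℝ => x) (Xᴴ * X) := by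
            rw [cfc_id' ℝ (Xᴴ * X) hA]
        _ = cfc Real.sqrt (Xᴴ * X) := by
            rw [← cfc_mul _ _ _ (hcont _) (hcont _)]
            simp only [inv_sqrt_mul_self]
    rw [traceNorm_eq_re_trace_cfc_sqrt, mul_assoc, hRA]

lemma traceNorm_le_of_forall_trace_mul_eq {m : Type*} [Fintype m] [DecidableEq m]
    {X : Matrix n n ℂ} {Y : Matrix m m ℂ}
    (h : ∀ W : Matrix m m ℂ, ‖W‖ ≤ 1 →
      ∃ W' : Matrix n n ℂ, ‖W'‖ ≤ 1 ∧ (W * Y).trace = (W' * X).trace) :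
    traceNorm Y ≤ traceNorm X := by
  obtain ⟨W, hW, hWY⟩ := exists_norm_le_one_re_trace_mul_eq_traceNorm Y
  obtain ⟨W', hW', heq⟩ := h W hW
  rw [← hWY, heq]
  exact (Complex.re_le_norm _).trans (norm_trace_mul_le_traceNorm hW' X)

lemma traceNorm_sub_le (A B : Matrix n n ℂ) : traceNorm (A - B) ≤ traceNorm A + traceNorm B := by
  obtain ⟨W, hW, hWAB⟩ := exists_norm_le_one_re_trace_mul_eq_traceNorm (A - B)
  rw [← hWAB, mul_sub, trace_sub, Complex.sub_re]
  have hA := (Complex.re_le_norm _).trans (norm_trace_mul_le_traceNorm hW A)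
  have hB := ((neg_le_abs _).trans (Complex.abs_re_le_norm _)).trans
    (norm_trace_mul_le_traceNorm hW B)
  linarith

lemma traceNorm_mul_mul_star_le {K : Matrix n n ℂ} (hK : K ∈ unitary (Matrix n n ℂ))
    (X : Matrix n n ℂ) : traceNorm (K * X * star K) ≤ traceNorm X := by
  refine traceNorm_le_of_forall_trace_mul_eq fun W hW => ⟨star K * W * K, ?_, ?_⟩
  · rwa [CStarRing.norm_mul_mem_unitary _ hK,
      CStarRing.norm_mem_unitary_mul _ (Unitary.star_mem hK)]
  · rw [← mul_assoc, ← mul_assoc, trace_mul_cycle]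
    simp only [mul_assoc]

end TraceNorm

section Channels

variable {n m : Type*} [Fintype n] [Fintype m]

lemma tensorApplyLeft_sub (S T : Matrix n n ℂ →ₗ[ℂ] Matrix n n ℂ) (X : Matrix (n × m) (n × m) ℂ) :
    tensorApplyLeft (S - T) X = tensorApplyLeft S X - tensorApplyLeft T X :=
  rfl

lemma tensorApplyLeft_comp (S T : Matrix n n ℂ →ₗ[ℂ] Matrix n n ℂ) (X : Matrix (n × m) (n × m) ℂ) :
    tensorApplyLeft (S ∘ₗ T) X = tensorApplyLeft S (tensorApplyLeft T X) :=
  rfl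

lemma tensorApplyLeft_unitaryChannel [DecidableEq m] (U : Matrix n n ℂ)
    (X : Matrix (n × m) (n × m) ℂ) :
    tensorApplyLeft (unitaryChannel U) X = (U ⊗ₖ 1) * X * (U ⊗ₖ 1)ᴴ := by
  ext p q
  simp [tensorApplyLeft, unitaryChannel, mul_apply, Fintype.sum_prod_type, one_apply,
    Finset.sum_mul, apply_ite (starRingEnd ℂ)]

lemma tensorApplyLeft_dephaseMap_apply [DecidableEq n] (X : Matrix (n × m) (n × m) ℂ)
    (p q : n × m) :
    tensorApplyLeft (dephaseMap n) X p q = if p.1 = q.1 then X p q else 0 := by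
  by_cases h : p.1 = q.1 <;> simp [tensorApplyLeft, dephaseMap, diagonal_apply, h]

lemma trace_mul_tensorApplyLeft_dephaseMap [DecidableEq n] (W Z : Matrix (n × m) (n × m) ℂ) :
    (W * tensorApplyLeft (dephaseMap n) Z).trace =
      (tensorApplyLeft (dephaseMap n) W * Z).trace := by
  simp only [trace, diag_apply, mul_apply, tensorApplyLeft_dephaseMap_apply, mul_ite, ite_mul,
    mul_zero, zero_mul, eq_comm]

lemma trace_tensorApplyLeft_dephaseMap [DecidableEq n] (Z : Matrix (n × m) (n × m) ℂ) :
    (tensorApplyLeft (dephaseMap n) Z).trace = Z.trace := by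
  simp [trace, tensorApplyLeft_dephaseMap_apply]

lemma posSemidef_tensorApplyLeft_dephaseMap [DecidableEq n] [DecidableEq m]
    {Z : Matrix (n × m) (n × m) ℂ} (hZ : Z.PosSemidef) :
    (tensorApplyLeft (dephaseMap n) Z).PosSemidef := by
  let P (i : n) : Matrix (n × m) (n × m) ℂ := diagonal fun p => if p.1 = i then 1 else 0
  have hsum : tensorApplyLeft (dephaseMap n) Z = ∑ i, P i * Z * (P i)ᴴ := by
    ext p q
    simp [P, tensorApplyLeft_dephaseMap_apply, diagonal_mul, mul_diagonal, Matrix.sum_apply,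
      diagonal_conjTranspose, ite_mul, mul_ite, eq_comm]
  rw [hsum]
  exact posSemidef_sum _ fun i _ => hZ.mul_mul_conjTranspose_same _

lemma tensorApplyLeft_dephaseMap_vecMulVec_mul_eq_zero [DecidableEq n] (v w : n × m → ℂ)
    (h : ∀ i, ∑ c, star (v (i, c)) * w (i, c) = 0) :
    tensorApplyLeft (dephaseMap n) (vecMulVec v (star v)) *
      tensorApplyLeft (dephaseMap n) (vecMulVec w (star w)) = 0 := by
  ext p q
  rw [mul_apply, Fintype.sum_prod_type, Finset.sum_eq_single p.1
    (fun i _ hi => Finset.sum_eq_zero fun c _ => by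
      simp [tensorApplyLeft_dephaseMap_apply, Ne.symm hi]) (by simp)]
  by_cases hpq : p.1 = q.1
  · calc _ = v p * (∑ c, star (v (p.1, c)) * w (p.1, c)) * star (w q) := by
          rw [Finset.mul_sum, Finset.sum_mul]
          refine Finset.sum_congr rfl fun c _ => ?_
          simp only [tensorApplyLeft_dephaseMap_apply, vecMulVec_apply, if_pos hpq, if_true,
            Pi.star_apply]
          ring
      _ = 0 := by rw [h, mul_zero, zero_mul]
  · simp [tensorApplyLeft_dephaseMap_apply, hpq]

lemma norm_tensorApplyLeft_dephaseMap_le [DecidableEq n] [DecidableEq m]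
    (W : Matrix (n × m) (n × m) ℂ) : ‖tensorApplyLeft (dephaseMap n) W‖ ≤ ‖W‖ := by
  let T := toEuclideanCLM (𝕜 := ℂ) (n := n × m)
  let block (x : EuclideanSpace ℂ (n × m)) (i : n) : EuclideanSpace ℂ (n × m) :=
    WithLp.toLp 2 fun p => if p.1 = i then x p else 0
  have hblock (x : EuclideanSpace ℂ (n × m)) : ∑ i, ‖block x i‖ ^ 2 = ‖x‖ ^ 2 := by
    simp only [EuclideanSpace.norm_sq_eq, block, apply_ite (‖·‖ ^ 2),
      norm_zero, ne_eq, OfNat.ofNat_ne_zero, not_false_eq_true, zero_pow]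
    rw [Finset.sum_comm]
    simp
  have happly (x : EuclideanSpace ℂ (n × m)) (p : n × m) :
      T (tensorApplyLeft (dephaseMap n) W) x p = T W (block x p.1) p := by
    simp [T, block, ofLp_toEuclideanCLM, mulVec, dotProduct,
      tensorApplyLeft_dephaseMap_apply, ite_mul, mul_ite, eq_comm]
  refine ContinuousLinearMap.opNorm_le_bound _ (norm_nonneg W) fun x => ?_
  have hsq : ‖T (tensorApplyLeft (dephaseMap n) W) x‖ ^ 2 ≤ (‖W‖ * ‖x‖) ^ 2 :=
    calc ‖T (tensorApplyLeft (dephaseMap n) W) x‖ ^ 2 = ∑ p, ‖T W (block x p.1) p‖ ^ 2 := by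
          simp only [EuclideanSpace.norm_sq_eq, happly]
      _ ≤ ∑ p, ∑ i, ‖T W (block x i) p‖ ^ 2 :=
          Finset.sum_le_sum fun p _ => Finset.single_le_sum (f := fun i => ‖T W (block x i) p‖ ^ 2)
            (fun _ _ => by positivity) (Finset.mem_univ p.1)
      _ = ∑ i, ‖T W (block x i)‖ ^ 2 := by
          rw [Finset.sum_comm]
          simp only [EuclideanSpace.norm_sq_eq]
      _ ≤ ∑ i, (‖W‖ * ‖block x i‖) ^ 2 :=
          Finset.sum_le_sum fun i _ => pow_le_pow_left₀ (norm_nonneg _) ((T W).le_opNorm _) 2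
      _ = (‖W‖ * ‖x‖) ^ 2 := by simp only [mul_pow, ← Finset.mul_sum, hblock]
  exact (pow_le_pow_iff_left₀ (norm_nonneg _) (by positivity) two_ne_zero).mp hsq

lemma traceNorm_tensorApplyLeft_dephaseMap_le [DecidableEq n] [DecidableEq m]
    (Z : Matrix (n × m) (n × m) ℂ) : traceNorm (tensorApplyLeft (dephaseMap n) Z) ≤ traceNorm Z :=
  traceNorm_le_of_forall_trace_mul_eq fun W hW =>
    ⟨_, (norm_tensorApplyLeft_dephaseMap_le W).trans hW, trace_mul_tensorApplyLeft_dephaseMap W Z⟩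

lemma tensorApplyLeft_measChannel [DecidableEq n] [DecidableEq m] (U : Matrix n n ℂ)
    (X : Matrix (n × m) (n × m) ℂ) :
    tensorApplyLeft (measChannel U) X =
      tensorApplyLeft (dephaseMap n) ((Uᴴ ⊗ₖ 1) * X * star (Uᴴ ⊗ₖ 1)) := by
  rw [measChannel, tensorApplyLeft_comp, tensorApplyLeft_unitaryChannel, star_eq_conjTranspose]

lemma traceNorm_tensorApplyLeft_measChannel_le [DecidableEq n] [DecidableEq m] {U : Matrix n n ℂ}
    (hU : U ∈ unitaryGroup n ℂ) (X : Matrix (n × m) (n × m) ℂ) :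
    traceNorm (tensorApplyLeft (measChannel U) X) ≤ traceNorm X := by
  rw [tensorApplyLeft_measChannel]
  exact (traceNorm_tensorApplyLeft_dephaseMap_le _).trans
    (traceNorm_mul_mul_star_le (kronecker_mem_unitary (Unitary.star_mem hU) (one_mem _)) X)

lemma traceNorm_tensorApplyLeft_measChannel_sub_le [DecidableEq n] [DecidableEq m]
    {U : Matrix n n ℂ} (hU : U ∈ unitaryGroup n ℂ) (X : Matrix (n × m) (n × m) ℂ) :
    traceNorm (tensorApplyLeft (measChannel U - measChannel 1) X) ≤ 2 * traceNorm X := by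
  rw [tensorApplyLeft_sub, two_mul]
  exact (traceNorm_sub_le _ _).trans (add_le_add (traceNorm_tensorApplyLeft_measChannel_le hU X)
    (traceNorm_tensorApplyLeft_measChannel_le (one_mem _) X))

end Channels

lemma sum_star_vec_transpose_mul {n m : Type*} [Fintype m] (G C : Matrix n m ℂ) (i : n) :
    ∑ c, star (vec Gᵀ (i, c)) * vec Cᵀ (i, c) = (C * Gᴴ) i i := by
  simp [vec, mul_apply, mul_comm]

section Purification

variable {n m : Type*} [Fintype n] [Fintype m]

lemma mul_vecMulVec_mul_star (K : Matrix n n ℂ) (v : n → ℂ) :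
    K * vecMulVec v (star v) * star K = vecMulVec (K *ᵥ v) (star (K *ᵥ v)) := by
  rw [mul_vecMulVec, vecMulVec_mul, star_mulVec, star_eq_conjTranspose]

lemma kronecker_one_mulVec_vec_transpose [DecidableEq m] (A : Matrix n n ℂ) (C : Matrix n m ℂ) :
    (A ⊗ₖ (1 : Matrix m m ℂ)) *ᵥ vec Cᵀ = vec (A * C)ᵀ := by
  rw [kronecker_mulVec_vec, Matrix.one_mul, transpose_mul]

lemma trace_vecMulVec_vec_transpose (C : Matrix n m ℂ) :
    (vecMulVec (vec Cᵀ) (star (vec Cᵀ))).trace = (C * Cᴴ).trace := by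
  rw [trace_vecMulVec, dotProduct_comm, star_vec_dotProduct_vec, ← trace_transpose]
  congr 1
  ext i j
  simp [mul_apply, mul_comm]

lemma traceNorm_tensorApplyLeft_measChannel_sub_vecMulVec [DecidableEq n] [DecidableEq m]
    {U : Matrix n n ℂ} (hU : U ∈ unitaryGroup n ℂ) (C : Matrix n m ℂ)
    (hC : ∀ i, (C * Cᴴ * U) i i = 0) :
    traceNorm (tensorApplyLeft (measChannel U - measChannel 1) (vecMulVec (vec Cᵀ) (star (vec Cᵀ))))
      = 2 * (C * Cᴴ).trace.re := by
  have hconj (A : Matrix n n ℂ) : (A ⊗ₖ 1) * vecMulVec (vec Cᵀ) (star (vec Cᵀ)) * star (A ⊗ₖ 1)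
      = vecMulVec (vec (A * C)ᵀ) (star (vec (A * C)ᵀ)) := by
    rw [mul_vecMulVec_mul_star, kronecker_one_mulVec_vec_transpose]
  -- `ψ = vec Cᵀ` purifies `C Cᴴ`, and `diag (C Cᴴ U) = 0` says that `(Uᴴ ⊗ 1) ψ` and `ψ` are
  -- orthogonal on each block `{i} × m`, so the two dephased outputs have orthogonal supports
  have horth (i : n) : ∑ c, star (vec (Uᴴ * C)ᵀ (i, c)) * vec Cᵀ (i, c) = 0 := by
    rw [sum_star_vec_transpose_mul, conjTranspose_mul, conjTranspose_conjTranspose,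
      ← Matrix.mul_assoc, hC]
  have htrace : ((Uᴴ * C) * (Uᴴ * C)ᴴ).trace = (C * Cᴴ).trace :=
    calc ((Uᴴ * C) * (Uᴴ * C)ᴴ).trace = (Uᴴ * (C * Cᴴ * U)).trace := by
          simp only [conjTranspose_mul, conjTranspose_conjTranspose, Matrix.mul_assoc]
      _ = (C * Cᴴ * (U * Uᴴ)).trace := by rw [trace_mul_comm, Matrix.mul_assoc]
      _ = (C * Cᴴ).trace := by
          rw [← star_eq_conjTranspose, mem_unitaryGroup_iff.mp hU, Matrix.mul_one]
  rw [tensorApplyLeft_sub, tensorApplyLeft_measChannel, tensorApplyLeft_measChannel, hconj, hconj,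
    conjTranspose_one, Matrix.one_mul, traceNorm_sub_eq_of_mul_eq_zero
      (posSemidef_tensorApplyLeft_dephaseMap (posSemidef_vecMulVec_self_star _))
      (posSemidef_tensorApplyLeft_dephaseMap (posSemidef_vecMulVec_self_star _))
      (tensorApplyLeft_dephaseMap_vecMulVec_mul_eq_zero _ _ horth),
    trace_tensorApplyLeft_dephaseMap, trace_tensorApplyLeft_dephaseMap,
    trace_vecMulVec_vec_transpose, trace_vecMulVec_vec_transpose, htrace, two_mul]

end Purification

section DiamondNorm

variable {n : Type*} [Fintype n] [DecidableEq n]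

lemma exists_mul_conjTranspose_eq [Nonempty n] {ρ : Matrix n n ℂ} (hρ : ρ.PosSemidef) :
    ∃ (k : ℕ) (C : Matrix n (Fin (k + 1)) ℂ), C * Cᴴ = ρ := by
  obtain ⟨B, rfl⟩ := CStarAlgebra.nonneg_iff_eq_star_mul_self.mp hρ.nonneg
  obtain ⟨k, hk⟩ := Nat.exists_eq_succ_of_ne_zero (Fintype.card_ne_zero (α := n))
  let e : n ≃ Fin (k + 1) := (Fintype.equivFin n).trans (finCongr hk)
  refine ⟨k, Bᴴ.submatrix id e.symm, ?_⟩
  rw [conjTranspose_submatrix, conjTranspose_conjTranspose, submatrix_mul_equiv, submatrix_id_id,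
    star_eq_conjTranspose]

lemma diamondNorm_measChannel_sub_eq_two {U : Matrix n n ℂ} (hU : U ∈ unitaryGroup n ℂ)
    {ρ : Matrix n n ℂ} (hρ : IsDensityMatrix ρ) (hdiag : ∀ i, (ρ * U) i i = 0) :
    diamondNorm (measChannel U - measChannel 1) = 2 := by
  have : Nonempty n := by
    by_contra hn
    have htr := hρ.2
    simp [trace, not_nonempty_iff.mp hn] at htr
  obtain ⟨k, C, rfl⟩ := exists_mul_conjTranspose_eq hρ.1
  have hX : traceNorm (vecMulVec (vec Cᵀ) (star (vec Cᵀ))) = 1 := by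
    rw [traceNorm_eq_re_trace (posSemidef_vecMulVec_self_star _), trace_vecMulVec_vec_transpose,
      hρ.2, Complex.one_re]
  refine IsGreatest.csSup_eq ⟨⟨k, _, hX, ?_⟩, ?_⟩
  · rw [traceNorm_tensorApplyLeft_measChannel_sub_vecMulVec hU C hdiag, hρ.2, Complex.one_re,
      mul_one]
  · rintro t ⟨k', X, hX', rfl⟩
    simpa [hX'] using traceNorm_tensorApplyLeft_measChannel_sub_le hU X

end DiamondNorm

section TensorFamily

variable {d N : ℕ}

lemma tensorFamily_mul (ρ σ : Fin N → Matrix (Fin d) (Fin d) ℂ) :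
    tensorFamily ρ * tensorFamily σ = tensorFamily fun k => ρ k * σ k := by
  ext f g
  simp only [tensorFamily, mul_apply, of_apply]
  rw [Finset.prod_univ_sum, Fintype.piFinset_univ]
  exact Finset.sum_congr rfl fun h _ => Finset.prod_mul_distrib.symm

lemma tensorFamily_conjTranspose (ρ : Fin N → Matrix (Fin d) (Fin d) ℂ) :
    (tensorFamily ρ)ᴴ = tensorFamily fun k => (ρ k)ᴴ := by
  ext f g
  simp only [tensorFamily, conjTranspose_apply, of_apply, star_prod]

lemma tensorFamily_one : tensorFamily (fun _ : Fin N => (1 : Matrix (Fin d) (Fin d) ℂ)) = 1 := by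
  ext f g
  by_cases h : f = g
  · simp [tensorFamily, h, Matrix.one_apply]
  · obtain ⟨k, hk⟩ := Function.ne_iff.mp h
    rw [Matrix.one_apply_ne h]
    exact Finset.prod_eq_zero (Finset.mem_univ k) (Matrix.one_apply_ne hk)

lemma trace_tensorFamily (ρ : Fin N → Matrix (Fin d) (Fin d) ℂ) :
    (tensorFamily ρ).trace = ∏ k, (ρ k).trace := by
  simp only [trace, diag_apply, tensorFamily, of_apply]
  rw [Finset.prod_univ_sum, Fintype.piFinset_univ]

lemma posSemidef_tensorFamily {ρ : Fin N → Matrix (Fin d) (Fin d) ℂ}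
    (hρ : ∀ k, (ρ k).PosSemidef) : (tensorFamily ρ).PosSemidef := by
  choose B hB using fun k => CStarAlgebra.nonneg_iff_eq_star_mul_self.mp (hρ k).nonneg
  have : tensorFamily ρ = (tensorFamily B)ᴴ * tensorFamily B := by
    rw [tensorFamily_conjTranspose, tensorFamily_mul]
    exact congrArg tensorFamily (funext hB)
  rw [this]
  exact posSemidef_conjTranspose_mul_self _

lemma isDensityMatrix_tensorFamily {ρ : Fin N → Matrix (Fin d) (Fin d) ℂ}
    (hρ : ∀ k, IsDensityMatrix (ρ k)) : IsDensityMatrix (tensorFamily ρ) :=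
  ⟨posSemidef_tensorFamily fun k => (hρ k).1, by simp [trace_tensorFamily, fun k => (hρ k).2]⟩

lemma tensorPow_mem_unitaryGroup {V : Matrix (Fin d) (Fin d) ℂ} (hV : V ∈ unitaryGroup (Fin d) ℂ) :
    tensorPow V N ∈ unitaryGroup (Fin N → Fin d) ℂ := by
  rw [mem_unitaryGroup_iff, star_eq_conjTranspose]
  change tensorFamily _ * (tensorFamily _)ᴴ = 1
  rw [tensorFamily_conjTranspose, tensorFamily_mul]
  simp only [← star_eq_conjTranspose, mem_unitaryGroup_iff.mp hV, tensorFamily_one]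

lemma tensorFamily_mul_tensorPow_apply_self {V : Matrix (Fin d) (Fin d) ℂ}
    {σ : Fin N → Matrix (Fin d) (Fin d) ℂ} {c : Fin N → ℂ} (h : ∀ k, σ k * V = c k • σ k)
    (f : Fin N → Fin d) :
    (tensorFamily σ * tensorPow V N) f f = (∏ k, c k) * ∏ k, σ k (f k) (f k) := by
  rw [show tensorPow V N = tensorFamily fun _ => V from rfl, tensorFamily_mul]
  simp only [tensorFamily, of_apply, h, Matrix.smul_apply, smul_eq_mul, Finset.prod_mul_distrib]

end TensorFamily

section EigenProjection

variable {n : Type*} [Fintype n] [DecidableEq n]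

lemma toEuclideanLin_projMatrix (K : Submodule ℂ (EuclideanSpace ℂ n)) (x : EuclideanSpace ℂ n) :
    toEuclideanLin (projMatrix K) x = K.orthogonalProjectionOnto x := by
  rw [projMatrix, LinearEquiv.apply_symm_apply]
  rfl

lemma isHermitian_projMatrix (K : Submodule ℂ (EuclideanSpace ℂ n)) : (projMatrix K).IsHermitian :=
  isSymmetric_toEuclideanLin_iff.mp fun x y => by
    rw [toEuclideanLin_projMatrix, toEuclideanLin_projMatrix]
    exact Submodule.inner_starProjection_left_eq_right K x y

lemma mul_eigProj (V : Matrix n n ℂ) (μ : ℂ) : V * eigProj V μ = μ • eigProj V μ := by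
  apply toEuclideanLin.injective
  ext1 x
  rw [toLpLin_mul, LinearMap.comp_apply, LinearEquiv.map_smul, LinearMap.smul_apply, eigProj,
    toEuclideanLin_projMatrix]
  exact Module.End.mem_eigenspace_iff.mp (Submodule.coe_mem _)

lemma mul_eq_smul_of_eq_eigProj_mul_mul_eigProj {V : Matrix n n ℂ} (hV : V ∈ unitaryGroup n ℂ)
    {μ : ℂ} (hμ : μ ∈ spectrum ℂ V) {ρ : Matrix n n ℂ}
    (hρ : ρ = eigProj V μ * ρ * eigProj V μ) : ρ * V = μ • ρ := by
  have hP : (eigProj V μ)ᴴ = eigProj V μ := (isHermitian_projMatrix _).eq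
  have hPV : eigProj V μ * Vᴴ = star μ • eigProj V μ := by
    simpa [hP] using congrArg conjTranspose (mul_eigProj V μ)
  have hρV : ρ * Vᴴ = star μ • ρ := by
    rw [hρ, Matrix.mul_assoc, hPV, Matrix.mul_smul]
  have hμ : μ * star μ = 1 := by
    rw [Complex.star_def, Complex.mul_conj', mem_sphere_zero_iff_norm.mp
      (spectrum.subset_circle_of_unitary hV hμ)]
    norm_num
  calc ρ * V = (μ * star μ) • (ρ * V) := by rw [hμ, one_smul]
    _ = μ • (ρ * Vᴴ * V) := by rw [hρV, Matrix.smul_mul, smul_smul]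
    _ = μ • ρ := by
        rw [Matrix.mul_assoc, ← star_eq_conjTranspose, mem_unitaryGroup_iff'.mp hV, Matrix.mul_one]

end EigenProjection

lemma isDensityMatrix_smul_add_smul_add_smul {n : Type*} [Fintype n] {ρ₁ ρ₂ ρ₃ : Matrix n n ℂ}
    {p₁ p₂ p₃ : ℝ} (hp₁ : 0 ≤ p₁) (hp₂ : 0 ≤ p₂) (hp₃ : 0 ≤ p₃) (hsum : p₁ + p₂ + p₃ = 1)
    (h₁ : IsDensityMatrix ρ₁) (h₂ : IsDensityMatrix ρ₂) (h₃ : IsDensityMatrix ρ₃) :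
    IsDensityMatrix ((p₁ : ℂ) • ρ₁ + (p₂ : ℂ) • ρ₂ + (p₃ : ℂ) • ρ₃) := by
  refine ⟨((h₁.1.smul (Complex.zero_le_real.mpr hp₁)).add
    (h₂.1.smul (Complex.zero_le_real.mpr hp₂))).add (h₃.1.smul (Complex.zero_le_real.mpr hp₃)), ?_⟩
  simp only [trace_add, trace_smul, h₁.2, h₂.2, h₃.2, smul_eq_mul, mul_one]
  exact_mod_cast hsum

lemma mixture_mul_tensorPow_apply_self_eq_zero {d M : ℕ} {V ρ₁ ρd : Matrix (Fin d) (Fin d) ℂ}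
    {lam₁ lamd : ℂ} (h₁ : ρ₁ * V = lam₁ • ρ₁) (hd : ρd * V = lamd • ρd)
    (hdiag : ∀ i, ρ₁ i i = ρd i i) {p₁ p₂ p₃ : ℂ}
    (hzero : p₁ * lam₁ ^ (M + 1) + p₂ * (lam₁ * lamd ^ M) + p₃ * lamd ^ (M + 1) = 0)
    (f : Fin (M + 1) → Fin d) :
    ((p₁ • tensorFamily (fun _ => ρ₁) +
        p₂ • tensorFamily (fun k : Fin (M + 1) => if (k : ℕ) = 0 then ρ₁ else ρd) +
        p₃ • tensorFamily (fun _ => ρd)) * tensorPow V (M + 1) :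
      Matrix (Fin (M + 1) → Fin d) (Fin (M + 1) → Fin d) ℂ) f f = 0 := by
  have hσV (k : Fin (M + 1)) : (if (k : ℕ) = 0 then ρ₁ else ρd) * V =
      (if (k : ℕ) = 0 then lam₁ else lamd) • (if (k : ℕ) = 0 then ρ₁ else ρd) := by
    split_ifs <;> assumption
  have hσdiag (k : Fin (M + 1)) :
      (if (k : ℕ) = 0 then ρ₁ else ρd) (f k) (f k) = ρ₁ (f k) (f k) := by
    split_ifs <;> simp [hdiag]
  have hprod : ∏ k : Fin (M + 1), (if (k : ℕ) = 0 then lam₁ else lamd) = lam₁ * lamd ^ M := by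
    simp [Fin.prod_univ_succ]
  rw [add_mul, add_mul, Matrix.smul_mul, Matrix.smul_mul, Matrix.smul_mul, Matrix.add_apply,
    Matrix.add_apply, Matrix.smul_apply, Matrix.smul_apply, Matrix.smul_apply,
    tensorFamily_mul_tensorPow_apply_self fun _ => h₁, tensorFamily_mul_tensorPow_apply_self hσV,
    tensorFamily_mul_tensorPow_apply_self fun _ => hd]
  simp only [Finset.prod_const, Finset.card_univ, Fintype.card_fin, hprod, hσdiag, ← hdiag,
    smul_eq_mul]
  linear_combination (∏ k, ρ₁ (f k) (f k)) * hzero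

theorem stmt18 (d N : ℕ) (hN : 1 ≤ N) (V : Matrix (Fin d) (Fin d) ℂ)
    (hV : V ∈ Matrix.unitaryGroup (Fin d) ℂ)
    (lam₁ lamd : ℂ) (h₁ : lam₁ ∈ spectrum ℂ V) (h₂ : lamd ∈ spectrum ℂ V)
    (ρ₁ ρd : Matrix (Fin d) (Fin d) ℂ) (hρ₁ : IsDensityMatrix ρ₁) (hρd : IsDensityMatrix ρd)
    (hP₁ : ρ₁ = eigProj V lam₁ * ρ₁ * eigProj V lam₁)
    (hPd : ρd = eigProj V lamd * ρd * eigProj V lamd)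
    (hdiag : ∀ i, ρ₁ i i = ρd i i)
    (p₁ p₂ p₃ : ℝ) (hp₁ : 0 ≤ p₁) (hp₂ : 0 ≤ p₂) (hp₃ : 0 ≤ p₃) (hsum : p₁ + p₂ + p₃ = 1)
    (hzero : (p₁ : ℂ) * lam₁ ^ N + (p₂ : ℂ) * (lam₁ * lamd ^ (N - 1)) + (p₃ : ℂ) * lamd ^ N = 0) :
    ∀ ρ : Matrix (Fin N → Fin d) (Fin N → Fin d) ℂ,
      ρ = (p₁ : ℂ) • tensorFamily (fun _ : Fin N => ρ₁) +
          (p₂ : ℂ) • tensorFamily (fun k : Fin N => if (k : ℕ) = 0 then ρ₁ else ρd) +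
          (p₃ : ℂ) • tensorFamily (fun _ : Fin N => ρd) →
      IsDensityMatrix ρ ∧ (∀ f, (ρ * tensorPow V N) f f = 0) ∧
      diamondNorm (measChannel (tensorPow V N) -
        measChannel (1 : Matrix (Fin N → Fin d) (Fin N → Fin d) ℂ)) = 2 := by
  intro ρ hρ
  obtain ⟨M, rfl⟩ : ∃ M, N = M + 1 := ⟨N - 1, by omega⟩
  rw [Nat.add_sub_cancel] at hzero
  have hdensity : IsDensityMatrix ρ := hρ ▸ isDensityMatrix_smul_add_smul_add_smul hp₁ hp₂ hp₃ hsum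
    (isDensityMatrix_tensorFamily fun _ => hρ₁)
    (isDensityMatrix_tensorFamily fun _ => by split_ifs <;> assumption)
    (isDensityMatrix_tensorFamily fun _ => hρd)
  have hdiagρ (f : Fin (M + 1) → Fin d) : (ρ * tensorPow V (M + 1)) f f = 0 :=
    hρ ▸ mixture_mul_tensorPow_apply_self_eq_zero
      (mul_eq_smul_of_eq_eigProj_mul_mul_eigProj hV h₁ hP₁)
      (mul_eq_smul_of_eq_eigProj_mul_mul_eigProj hV h₂ hPd) hdiag hzero f
  exact ⟨hdensity, hdiagρ,
    diamondNorm_measChannel_sub_eq_two (tensorPow_mem_unitaryGroup hV) hdensity hdiagρ⟩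

end Paper
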